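/- Let 𝔏 be a locally finitely presentable category with a weak factorization system (ℰ, ℱ) cofibrantly generated by the arrows of ℰ between compact 0-extensions. Then ℱ has the right cancellation property: if f : A → B and g : B → C are composable arrows with g∘f ∈ ℱ and f ∈ ℱ, then g ∈ ℱ. -/

import Mathlib

open CategoryTheory CategoryTheory.Limits Opposite

universe v u

namespace CompactArrows

variable {C : Type u} [Category.{v} C]

/-- The cocone on `D ⋙ Hom(X, -)` induced by a cocone on `D`. -/
def homCocone {J : Type v} [SmallCategory J] {D : J ⥤ C} (c : Cocone D) (X : C) :
    Cocone (D ⋙ coyoneda.obj (op X)) where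
  pt := X ⟶ c.pt
  ι :=
    { app := fun j => TypeCat.ofHom (fun (g : X ⟶ D.obj j) => g ≫ c.ι.app j)
      naturality := by
        intro j j' t
        ext g
        simp }

/-- The canonical comparison map `colim_j Hom(X, D_j) ⟶ Hom(X, colim D)`,
relative to a chosen (co)limiting cocone `c` on `D`. -/
noncomputable def canMap {J : Type v} [SmallCategory J] {D : J ⥤ C} (c : Cocone D) (X : C) :
    colimit (D ⋙ coyoneda.obj (op X)) ⟶ (X ⟶ c.pt) :=
  colimit.desc _ (homCocone c X)

/-- `X` is a compact object: `Hom(X, -)` preserves small filtered colimits. -/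
def CompactObj (X : C) : Prop :=
  ∀ (J : Type v) (_ : SmallCategory J) (_ : IsFiltered J) (D : J ⥤ C) (c : Cocone D),
    IsColimit c → IsIso (canMap c X)

/-- `f : A ⟶ B` is a compact arrow: for every small filtered diagram `D` the comparison
square between `colim_j Hom(B, D_j) → Hom(B, colim D)` and
`colim_j Hom(A, D_j) → Hom(A, colim D)` (via precomposition with `f`) is a pullback of sets. -/
def CompactArrow {A B : C} (f : A ⟶ B) : Prop :=
  ∀ (J : Type v) (_ : SmallCategory J) (_ : IsFiltered J) (D : J ⥤ C) (c : Cocone D),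
    IsColimit c →
      IsPullback (canMap c B)
        (colimMap (Functor.whiskerLeft D (coyoneda.map f.op)))
        (TypeCat.ofHom (fun (g : B ⟶ c.pt) => f ≫ g))
        (canMap c A)

end CompactArrows

open CompactArrows

/-- The restricted Yoneda functor `E ↦ Hom(A -, E)` (as in the older Mathlib). -/
def CategoryTheory.Presheaf.restrictedYoneda {C' : Type*} [Category C'] {ℰ : Type*} [Category ℰ]
    (A : C' ⥤ ℰ) : ℰ ⥤ C'ᵒᵖ ⥤ Type _ :=
  yoneda ⋙ (Functor.whiskeringLeft _ _ _).obj (Functor.op A)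

/-!
A lifting problem of `e : I ⟶ J` against `g` whose top map `u : I ⟶ B` factors through `f`
is a lifting problem of `e` against `f ≫ g`, and the lift found there, composed with `f`,
solves the original one. When `I` is a 0-extension and `f ∈ ℱ`, every `u` factors through `f`
by lifting `0 ⟶ I` against `f`.
-/

namespace CategoryTheory.HasLiftingProperty

variable {L : Type*} [Category L] {I J A B C : L}

theorem exists_comp_eq_of_initial [HasInitial L] (f : A ⟶ B)
    [HasLiftingProperty (initial.to I) f] (u : I ⟶ B) : ∃ u' : I ⟶ A, u' ≫ f = u :=
  have sq : CommSq (initial.to A) (initial.to I) f u := ⟨initial.hom_ext _ _⟩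
  ⟨sq.lift, sq.fac_right⟩

theorem of_comp_of_exists_comp_eq (e : I ⟶ J) (f : A ⟶ B) (g : B ⟶ C)
    (hfactor : ∀ u : I ⟶ B, ∃ u' : I ⟶ A, u' ≫ f = u) [HasLiftingProperty e (f ≫ g)] :
    HasLiftingProperty e g where
  sq_hasLift {u v} sq := by
    obtain ⟨u', rfl⟩ := hfactor u
    have sq' : CommSq u' e (f ≫ g) v := ⟨by rw [← Category.assoc, sq.w]⟩
    exact ⟨⟨{ l := sq'.lift ≫ f
              fac_left := by rw [← Category.assoc, sq'.fac_left]
              fac_right := by rw [Category.assoc, sq'.fac_right] }⟩⟩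

end CategoryTheory.HasLiftingProperty

theorem full_maps_right_cancellation_general
    {L : Type u} [Category.{v} L] [HasColimits L]
    (E F : MorphismProperty L)
    (hlift : ∀ {A B X Y : L} (e : A ⟶ B) (f : X ⟶ Y), E e → F f → HasLiftingProperty e f)
    -- cofibrant generation by the E-maps between compact 0-extensions
    (hgen : ∀ {X Y : L} (f : X ⟶ Y), F f ↔
      ∀ {I J : L} (e : I ⟶ J), E e → CompactObj I → CompactObj J →
        E (initial.to I) → E (initial.to J) → HasLiftingProperty e f) :
    ∀ {A B C : L} (f : A ⟶ B) (g : B ⟶ C), F f → F (f ≫ g) → F g := by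
  intro A B C f g hf hfg
  rw [hgen]
  intro I J e hEe hcI hcJ h0I h0J
  have : HasLiftingProperty (initial.to I) f := hlift _ f h0I hf
  have : HasLiftingProperty e (f ≫ g) := (hgen (f ≫ g)).1 hfg e hEe hcI hcJ h0I h0J
  exact HasLiftingProperty.of_comp_of_exists_comp_eq e f g
    (HasLiftingProperty.exists_comp_eq_of_initial f)

/-- let `L` be a locally finitely presentable category (cocomplete, with
an essentially small dense subcategory of compact objects) with a weak factorization
system `(E, F)` cofibrantly generated by the arrows of `E` between compact
0-extensions (objects `I` with `0 ⟶ I` in `E`). Then `F` has the right cancellation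
property: if `f : A ⟶ B` and `g : B ⟶ C` are composable with `F f` and `F (f ≫ g)`,
then `F g`. -/
theorem full_maps_right_cancellation
    {L : Type u} [Category.{v} L] [HasColimits L]
    [EssentiallySmall.{v} (ObjectProperty.FullSubcategory (CompactObj (C := L)))]
    (hlfp_dense : (Presheaf.restrictedYoneda
      (ObjectProperty.ι (CompactObj (C := L)))).Full ∧
      (Presheaf.restrictedYoneda
        (ObjectProperty.ι (CompactObj (C := L)))).Faithful)
    (E F : MorphismProperty L)
    (hlift : ∀ {A B X Y : L} (e : A ⟶ B) (f : X ⟶ Y), E e → F f → HasLiftingProperty e f)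
    (hE : ∀ {A B : L} (e : A ⟶ B),
      (∀ {X Y : L} (f : X ⟶ Y), F f → HasLiftingProperty e f) → E e)
    (hfact : ∀ {X Y : L} (f : X ⟶ Y),
      ∃ (Z : L) (e : X ⟶ Z) (m : Z ⟶ Y), E e ∧ F m ∧ e ≫ m = f)
    -- cofibrant generation by the E-maps between compact 0-extensions
    (hgen : ∀ {X Y : L} (f : X ⟶ Y), F f ↔
      ∀ {I J : L} (e : I ⟶ J), E e → CompactObj I → CompactObj J →
        E (initial.to I) → E (initial.to J) → HasLiftingProperty e f) :
    ∀ {A B C : L} (f : A ⟶ B) (g : B ⟶ C), F f → F (f ≫ g) → F g :=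
  full_maps_right_cancellation_general E F hlift hgen
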